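/- Let μ be a Radon probability measure on ℝ with lower dimension underline{dim}(μ) > 0. Then for every δ > overline{dim}(μ)/underline{dim}(μ) and every η ∈ (0,1], μ(E_μ(δ,η)) = 0. -/

import Mathlib

open MeasureTheory Metric Set Filter
open Topology

/-- The annulus `A(x,r,δ) = B(x,r) \ B(x, r - r^δ)` in `ℝ`. -/
noncomputable def annulus (x r δ : ℝ) : Set ℝ :=
  closedBall x r \ closedBall x (r - r ^ δ)

/-- `E_μ(δ,η)` for a measure on `ℝ`. -/
def Eset (μ : Measure ℝ) (δ η : ℝ) : Set ℝ :=
  {x | ∃ r : ℕ → ℝ, (∀ n, 0 < r n ∧ r n < 1) ∧ Tendsto r atTop (nhds 0) ∧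
      ∀ n, ENNReal.ofReal η * μ (closedBall x (r n)) ≤ μ (annulus x (r n) δ)}

/-- Lower dimension of a measure on `ℝ`. -/
noncomputable def lowerDim (μ : Measure ℝ) : ℝ :=
  sSup {α : ℝ | 0 ≤ α ∧ ∀ᵐ x ∂μ, ∃ rx > (0 : ℝ), ∀ r : ℝ, 0 < r → r < rx →
    μ (closedBall x r) ≤ ENNReal.ofReal (r ^ α)}

/-- Upper dimension of a measure on `ℝ`. -/
noncomputable def upperDim (μ : Measure ℝ) : ℝ :=
  sInf {β : ℝ | 0 ≤ β ∧ ∀ᵐ x ∂μ, ∃ rx > (0 : ℝ), ∀ r : ℝ, 0 < r → r < rx →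
    ENNReal.ofReal (r ^ β) ≤ μ (closedBall x r)}

private lemma annulus_subset_aux (x r δ : ℝ) :
    annulus x r δ ⊆ Icc (x - r) (x - r + r ^ δ) ∪ Icc (x + r - r ^ δ) (x + r) := by
  intro y hy
  rw [annulus, Real.closedBall_eq_Icc, Real.closedBall_eq_Icc] at hy
  obtain ⟨⟨h1, h2⟩, h3⟩ := hy
  simp only [mem_Icc, not_and_or, not_le] at h3
  rcases h3 with h | h
  · exact Or.inl ⟨h1, by linarith⟩
  · exact Or.inr ⟨by linarith, h2⟩

private lemma two_mem_upper (μ : Measure ℝ) [IsProbabilityMeasure μ] :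
    (2:ℝ) ∈ {β : ℝ | 0 ≤ β ∧ ∀ᵐ x ∂μ, ∃ rx > (0 : ℝ), ∀ r : ℝ, 0 < r → r < rx →
      ENNReal.ofReal (r ^ β) ≤ μ (closedBall x r)} := by
  refine ⟨by norm_num, ?_⟩
  filter_upwards [Besicovitch.ae_tendsto_rnDeriv volume μ, Measure.rnDeriv_lt_top volume μ]
    with x hx hlt
  set c := volume.rnDeriv μ x with hc
  set M : ℝ := c.toReal + 1 with hMdef
  have hM : 0 < M := by positivity
  have hcM : c < ENNReal.ofReal M := by
    rw [ENNReal.lt_ofReal_iff_toReal_lt hlt.ne]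
    simp [hMdef]
  have hev : ∀ᶠ r in 𝓝[>] (0:ℝ),
      volume (closedBall x r) / μ (closedBall x r) < ENNReal.ofReal M :=
    hx.eventually_lt_const hcM
  obtain ⟨ε, hε, hεs⟩ := mem_nhdsGT_iff_exists_Ioc_subset.1 hev
  refine ⟨min ε (2 / M), lt_min hε (by positivity), fun r hr hr' => ?_⟩
  have hrε : r ∈ Ioc (0:ℝ) ε := ⟨hr, le_of_lt (lt_of_lt_of_le hr' (min_le_left _ _))⟩
  have hratio : volume (closedBall x r) / μ (closedBall x r) < ENNReal.ofReal M := hεs hrε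
  have hvol : volume (closedBall x r) = ENNReal.ofReal (2 * r) := Real.volume_closedBall x r
  have hvol0 : volume (closedBall x r) ≠ 0 := by
    rw [hvol]; simp [ENNReal.ofReal_eq_zero]; linarith
  have hμ0 : μ (closedBall x r) ≠ 0 := by
    intro h
    rw [h, ENNReal.div_zero hvol0] at hratio
    exact (not_lt_of_ge le_top) (hratio.trans_le le_top)
  have h1 : volume (closedBall x r) < ENNReal.ofReal M * μ (closedBall x r) :=
    (ENNReal.div_lt_iff (Or.inl hμ0) (Or.inr (by rw [hvol]; exact ENNReal.ofReal_ne_top))).1 hratio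
  have hrM : r * M ≤ 2 := by
    have := lt_of_lt_of_le hr' (min_le_right _ _)
    rw [lt_div_iff₀ hM] at this
    linarith
  have h2 : r ^ (2:ℝ) * M ≤ 2 * r := by
    rw [Real.rpow_two]
    nlinarith
  have h3 : ENNReal.ofReal M * ENNReal.ofReal (r ^ (2:ℝ)) ≤
      ENNReal.ofReal M * μ (closedBall x r) := by
    calc ENNReal.ofReal M * ENNReal.ofReal (r ^ (2:ℝ))
        = ENNReal.ofReal (r ^ (2:ℝ) * M) := by
          rw [← ENNReal.ofReal_mul hM.le, mul_comm]
      _ ≤ ENNReal.ofReal (2 * r) := ENNReal.ofReal_le_ofReal h2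
      _ = volume (closedBall x r) := hvol.symm
      _ ≤ ENNReal.ofReal M * μ (closedBall x r) := h1.le
  exact (ENNReal.mul_le_mul_iff_right (by simp [ENNReal.ofReal_eq_zero]; linarith)
    ENNReal.ofReal_ne_top).1 h3

private lemma Fk_closed (μ : Measure ℝ) (α t : ℝ) :
    IsClosed {y : ℝ | ∀ q : ℝ, 0 < q → q < t → μ (closedBall y q) ≤ ENNReal.ofReal (q ^ α)} := by
  set s := {y : ℝ | ∀ q : ℝ, 0 < q → q < t → μ (closedBall y q) ≤ ENNReal.ofReal (q ^ α)}
  refine isClosed_of_closure_subset fun y hy q hq hqt => ?_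
  have key : ∀ q' : ℝ, q < q' → q' < t → μ (closedBall y q) ≤ ENNReal.ofReal (q' ^ α) := by
    intro q' hq' hq't
    obtain ⟨y', hy's, hy'd⟩ := Metric.mem_closure_iff.1 hy (q' - q) (by linarith)
    have hsub : closedBall y q ⊆ closedBall y' q' := by
      intro z hz
      rw [mem_closedBall] at hz ⊢
      calc dist z y' ≤ dist z y + dist y y' := dist_triangle _ _ _
        _ ≤ q + (q' - q) := add_le_add hz hy'd.le
        _ = q' := by ring
    exact (measure_mono hsub).trans (hy's q' (by linarith) hq't)
  set qn : ℕ → ℝ := fun n => q + (t - q) / (n + 2) with hqn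
  have hqnq : ∀ n, q < qn n ∧ qn n < t := by
    intro n
    have h2 : (0:ℝ) < (n:ℝ) + 2 := by positivity
    constructor
    · have : 0 < (t - q) / ((n:ℝ) + 2) := by
        apply div_pos (by linarith) h2
      simp [hqn]; linarith
    · have : (t - q) / ((n:ℝ) + 2) < t - q := by
        rw [div_lt_iff₀ h2]
        nlinarith
      simp [hqn]; linarith
  have htendqn : Tendsto qn atTop (𝓝 q) := by
    have : Tendsto (fun n : ℕ => (t - q) / ((n:ℝ) + 2)) atTop (𝓝 0) := by
      apply Tendsto.div_atTop tendsto_const_nhds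
      exact tendsto_atTop_add_const_right _ 2 tendsto_natCast_atTop_atTop
    have h := tendsto_const_nhds.add this (α := ℕ) (f := fun _ : ℕ => q)
    simpa using h
  have htend : Tendsto (fun n => ENNReal.ofReal ((qn n) ^ α)) atTop
      (𝓝 (ENNReal.ofReal (q ^ α))) := by
    apply (ENNReal.continuous_ofReal.tendsto _).comp
    exact ((Real.continuousAt_rpow_const q α (Or.inl hq.ne')).tendsto).comp htendqn
  exact ge_of_tendsto htend (Eventually.of_forall fun n =>
    key (qn n) (hqnq n).1 (hqnq n).2)

/-- On `ℝ`: if `underline dim μ > 0`, then for every `δ > overline dim μ / underline dim μ`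
and `η ∈ (0,1]`, `μ(E_μ(δ,η)) = 0`. -/
theorem stmt3 (μ : Measure ℝ) [IsProbabilityMeasure μ] [μ.Regular]
    (hlow : 0 < lowerDim μ)
    (δ η : ℝ) (hδ : upperDim μ / lowerDim μ < δ) (hη : η ∈ Set.Ioc (0 : ℝ) 1) :
    μ (Eset μ δ η) = 0 := by
  -- Notation for the two dimension defining sets
  set Sα := {α : ℝ | 0 ≤ α ∧ ∀ᵐ x ∂μ, ∃ rx > (0 : ℝ), ∀ r : ℝ, 0 < r → r < rx →
    μ (closedBall x r) ≤ ENNReal.ofReal (r ^ α)} with hSα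
  set Sβ := {β : ℝ | 0 ≤ β ∧ ∀ᵐ x ∂μ, ∃ rx > (0 : ℝ), ∀ r : ℝ, 0 < r → r < rx →
    ENNReal.ofReal (r ^ β) ≤ μ (closedBall x r)} with hSβ
  have hlowdef : lowerDim μ = sSup Sα := rfl
  have huppdef : upperDim μ = sInf Sβ := rfl
  have hSβne : Sβ.Nonempty := ⟨2, two_mem_upper μ⟩
  have hupp0 : 0 ≤ upperDim μ := by
    rw [huppdef]; exact le_csInf hSβne fun b hb => hb.1
  have hδ0 : 0 < δ := lt_of_le_of_lt (div_nonneg hupp0 hlow.le) hδ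
  have huppδ : upperDim μ < δ * lowerDim μ := by
    rw [div_lt_iff₀ hlow] at hδ; linarith
  obtain ⟨β, hβS, hβlt⟩ : ∃ β ∈ Sβ, β < δ * lowerDim μ := by
    rw [huppdef] at huppδ
    exact exists_lt_of_csInf_lt hSβne huppδ
  have hSαne : Sα.Nonempty := by
    refine ⟨0, le_refl 0, ?_⟩
    filter_upwards with x
    exact ⟨1, one_pos, fun r hr hr1 => by
      simp [Real.rpow_zero, ENNReal.ofReal_one, prob_le_one]⟩
  obtain ⟨α, hαS, hαgt⟩ : ∃ α ∈ Sα, max (β / δ) 0 < α := by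
    rw [hlowdef] at hβlt hlow
    refine exists_lt_of_lt_csSup hSαne ?_
    rw [max_lt_iff]
    exact ⟨(div_lt_iff₀ hδ0).2 (by linarith), hlow⟩
  have hα0 : 0 < α := lt_of_le_of_lt (le_max_right _ _) hαgt
  have hβ0 : 0 ≤ β := hβS.1
  have hβδα : β < δ * α := by
    have := lt_of_le_of_lt (le_max_left (β/δ) 0) hαgt
    rw [div_lt_iff₀ hδ0] at this; linarith
  have hexp : 0 < δ * α - β := by linarith
  -- The good sets
  set F : ℕ → Set ℝ := fun k =>
    {y : ℝ | ∀ q : ℝ, 0 < q → q < 1 / ((k:ℝ) + 1) → μ (closedBall y q) ≤ ENNReal.ofReal (q ^ α)}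
    with hF
  have hFclosed : ∀ k, IsClosed (F k) := fun k => Fk_closed μ α _
  -- almost-everywhere properties
  have hae : ∀ᵐ x ∂μ,
      ((∃ rx > (0 : ℝ), ∀ r : ℝ, 0 < r → r < rx → μ (closedBall x r) ≤ ENNReal.ofReal (r ^ α)) ∧
       (∃ rx > (0 : ℝ), ∀ r : ℝ, 0 < r → r < rx → ENNReal.ofReal (r ^ β) ≤ μ (closedBall x r)) ∧
       (∀ k : ℕ, Tendsto (fun r => μ ((F k)ᶜ ∩ closedBall x r) / μ (closedBall x r)) (𝓝[>] 0)
          (𝓝 (((F k)ᶜ).indicator 1 x)))) := by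
    refine hαS.2.and (hβS.2.and ?_)
    rw [ae_all_iff]
    intro k
    exact Besicovitch.ae_tendsto_measure_inter_div_of_measurableSet μ
      (hFclosed k).measurableSet.compl
  -- it suffices to show E is disjoint from the good set
  have key : ∀ x ∈ Eset μ δ η,
      ¬ ((∃ rx > (0 : ℝ), ∀ r : ℝ, 0 < r → r < rx → μ (closedBall x r) ≤ ENNReal.ofReal (r ^ α)) ∧
       (∃ rx > (0 : ℝ), ∀ r : ℝ, 0 < r → r < rx → ENNReal.ofReal (r ^ β) ≤ μ (closedBall x r)) ∧
       (∀ k : ℕ, Tendsto (fun r => μ ((F k)ᶜ ∩ closedBall x r) / μ (closedBall x r)) (𝓝[>] 0)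
          (𝓝 (((F k)ᶜ).indicator 1 x)))) := by
    rintro x hxE ⟨⟨rα, hrα, hαx⟩, ⟨rβ, hrβ, hβx⟩, hdens⟩
    obtain ⟨rs, hrs, hrtend, hrE⟩ := hxE
    obtain ⟨k, hk⟩ := exists_nat_one_div_lt hrα
    have hxF : x ∈ F k := fun q hq hq' => hαx q hq (hq'.trans hk)
    have hind : ((F k)ᶜ).indicator (1 : ℝ → ENNReal) x = 0 :=
      Set.indicator_of_notMem (by simpa using hxF) 1
    have htd : Tendsto (fun r => μ ((F k)ᶜ ∩ closedBall x r) / μ (closedBall x r)) (𝓝[>] 0)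
        (𝓝 0) := hind ▸ hdens k
    have hrtend' : Tendsto rs atTop (𝓝[>] (0:ℝ)) :=
      tendsto_nhdsWithin_of_tendsto_nhds_of_eventually_within rs hrtend
        (Eventually.of_forall fun n => (hrs n).1)
    have ev1 : ∀ᶠ n in atTop,
        μ ((F k)ᶜ ∩ closedBall x (rs n)) / μ (closedBall x (rs n)) < ENNReal.ofReal (η / 2) :=
      (htd.comp hrtend').eventually_lt_const (ENNReal.ofReal_pos.2 (by linarith [hη.1]))
    have ev2 : ∀ᶠ n in atTop, rs n < rβ := hrtend.eventually_lt_const hrβ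
    have hpowtend : ∀ c : ℝ, 0 < c → Tendsto (fun n => rs n ^ c) atTop (𝓝 0) := by
      intro c hc
      have h0 : Tendsto (fun s : ℝ => s ^ c) (𝓝 0) (𝓝 ((0:ℝ) ^ c)) :=
        (Real.continuousAt_rpow_const 0 c (Or.inr hc.le)).tendsto
      rw [Real.zero_rpow hc.ne'] at h0
      exact h0.comp hrtend
    have ev3 : ∀ᶠ n in atTop, rs n ^ δ < 1 / ((k:ℝ) + 1) :=
      (hpowtend δ hδ0).eventually_lt_const (by positivity)
    have ev4 : ∀ᶠ n in atTop, rs n ^ (δ * α - β) < η / 4 :=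
      (hpowtend _ hexp).eventually_lt_const (by linarith [hη.1])
    obtain ⟨n, h1, h2, h3, h4⟩ := (ev1.and (ev2.and (ev3.and ev4))).exists
    set r := rs n with hrdef
    have hr0 : 0 < r := (hrs n).1
    set B := closedBall x r with hB
    have hμB_lb : ENNReal.ofReal (r ^ β) ≤ μ B := hβx r hr0 h2
    have hμB0 : μ B ≠ 0 :=
      (lt_of_lt_of_le (ENNReal.ofReal_pos.2 (Real.rpow_pos_of_pos hr0 β)) hμB_lb).ne'
    have hμBtop : μ B ≠ ⊤ := (measure_lt_top μ B).ne
    have hFc : μ ((F k)ᶜ ∩ B) ≤ ENNReal.ofReal (η / 2) * μ B :=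
      ((ENNReal.div_lt_iff (Or.inl hμB0) (Or.inl hμBtop)).1 h1).le
    have hA : ENNReal.ofReal η * μ B ≤ μ (annulus x r δ) := hrE n
    have hAsplit : μ (annulus x r δ) ≤ μ (annulus x r δ ∩ F k) + μ ((F k)ᶜ ∩ B) := by
      refine le_trans (measure_mono ?_) (measure_union_le _ _)
      intro z hz
      by_cases hzF : z ∈ F k
      · exact Or.inl ⟨hz, hzF⟩
      · exact Or.inr ⟨hzF, hz.1⟩
    have hhalf : ENNReal.ofReal (η / 2) * μ B ≤ μ (annulus x r δ ∩ F k) := by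
      have heq : ENNReal.ofReal η * μ B
          = ENNReal.ofReal (η / 2) * μ B + ENNReal.ofReal (η / 2) * μ B := by
        rw [← add_mul, ← ENNReal.ofReal_add (by linarith [hη.1]) (by linarith [hη.1])]
        norm_num
      have hfin : ENNReal.ofReal (η / 2) * μ B ≠ ⊤ :=
        ENNReal.mul_ne_top ENNReal.ofReal_ne_top hμBtop
      have : ENNReal.ofReal (η / 2) * μ B + ENNReal.ofReal (η / 2) * μ B ≤
          μ (annulus x r δ ∩ F k) + ENNReal.ofReal (η / 2) * μ B := by
        rw [← heq]
        exact hA.trans (hAsplit.trans (add_le_add_right hFc _))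
      exact ENNReal.le_of_add_le_add_right hfin this
    -- one of the two boundary intervals carries a quarter of the mass
    have keyI : ∀ a b : ℝ, b = a + r ^ δ →
        ENNReal.ofReal (η / 4) * μ B ≤ μ (Icc a b ∩ F k) → False := by
      intro a b hab hIq
      have hμI0 : μ (Icc a b ∩ F k) ≠ 0 := by
        refine fun h => absurd (hIq.trans_eq h) (not_le.2 ?_)
        exact ENNReal.mul_pos (by simp [ENNReal.ofReal_eq_zero]; linarith [hη.1]) hμB0
      obtain ⟨y, hyI, hyF⟩ := nonempty_of_measure_ne_zero hμI0
      have hrδ0 : 0 < r ^ δ := Real.rpow_pos_of_pos hr0 δ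
      have hsub : Icc a b ⊆ closedBall y (r ^ δ) := by
        intro z hz
        rw [Real.closedBall_eq_Icc]
        constructor
        · have := hyI.2; have := hz.1; linarith [hab ▸ hyI.2]
        · have := hyI.1; have := hz.2; linarith [hab ▸ hz.2]
      have hbound : μ (Icc a b ∩ F k) ≤ ENNReal.ofReal ((r ^ δ) ^ α) :=
        (measure_mono (inter_subset_left.trans hsub)).trans (hyF (r ^ δ) hrδ0 h3)
      have hchain : ENNReal.ofReal (η / 4 * r ^ β) ≤ ENNReal.ofReal ((r ^ δ) ^ α) := by
        calc ENNReal.ofReal (η / 4 * r ^ β)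
            = ENNReal.ofReal (η / 4) * ENNReal.ofReal (r ^ β) :=
              ENNReal.ofReal_mul (by linarith [hη.1])
          _ ≤ ENNReal.ofReal (η / 4) * μ B := by
              exact mul_le_mul_right hμB_lb _
          _ ≤ μ (Icc a b ∩ F k) := hIq
          _ ≤ ENNReal.ofReal ((r ^ δ) ^ α) := hbound
      have hreal : η / 4 * r ^ β ≤ (r ^ δ) ^ α :=
        (ENNReal.ofReal_le_ofReal_iff (Real.rpow_nonneg hrδ0.le α)).1 hchain
      have hrw : (r ^ δ) ^ α = r ^ β * r ^ (δ * α - β) := by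
        rw [← Real.rpow_mul hr0.le, ← Real.rpow_add hr0]
        ring_nf
      rw [hrw] at hreal
      have hrβpos : 0 < r ^ β := Real.rpow_pos_of_pos hr0 β
      have : η / 4 ≤ r ^ (δ * α - β) := by
        have := (mul_le_mul_iff_left₀ hrβpos).1 (by linarith : η / 4 * r ^ β ≤ r ^ (δ * α - β) * r ^ β)
        exact this
      linarith
    -- split the annulus
    have hIcc : μ (annulus x r δ ∩ F k) ≤
        μ (Icc (x - r) (x - r + r ^ δ) ∩ F k) + μ (Icc (x + r - r ^ δ) (x + r) ∩ F k) := by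
      refine le_trans (measure_mono ?_) (measure_union_le _ _)
      intro z hz
      rcases annulus_subset_aux x r δ hz.1 with h | h
      · exact Or.inl ⟨h, hz.2⟩
      · exact Or.inr ⟨h, hz.2⟩
    have hquarter : ENNReal.ofReal (η / 4) * μ B ≤ μ (Icc (x - r) (x - r + r ^ δ) ∩ F k) ∨
        ENNReal.ofReal (η / 4) * μ B ≤ μ (Icc (x + r - r ^ δ) (x + r) ∩ F k) := by
      by_contra hcon
      push_neg at hcon
      have hsum : μ (Icc (x - r) (x - r + r ^ δ) ∩ F k) + μ (Icc (x + r - r ^ δ) (x + r) ∩ F k)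
          < ENNReal.ofReal (η / 4) * μ B + ENNReal.ofReal (η / 4) * μ B :=
        ENNReal.add_lt_add hcon.1 hcon.2
      have heq2 : ENNReal.ofReal (η / 4) * μ B + ENNReal.ofReal (η / 4) * μ B
          = ENNReal.ofReal (η / 2) * μ B := by
        rw [← add_mul, ← ENNReal.ofReal_add (by linarith [hη.1]) (by linarith [hη.1]),
          show η / 4 + η / 4 = η / 2 by ring]
      exact absurd (hhalf.trans hIcc) (not_le.2 (heq2 ▸ hsum))
    rcases hquarter with h | h
    · exact keyI _ _ (by ring) h
    · exact keyI _ _ (by ring) h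
  refine measure_mono_null (fun x hx => ?_) (ae_iff.1 hae)
  exact fun hP => key x hx hP
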